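/- For every μ > 0 and all i, j ∈ {0,1,2}, ∫_{ℝ²} e^{Ū_μ(y)} Z_i(y) Z_j(y) dy = (8π/3) δ_{ij}, where δ_{ij} is the Kronecker delta. -/

import Mathlib

open Real MeasureTheory

/-- `Ū_μ(y) = log(8μ²/(μ² + |y|²)²)`. -/
noncomputable def Ubar (μ : ℝ) (y : EuclideanSpace ℝ (Fin 2)) : ℝ :=
  Real.log (8 * μ ^ 2 / (μ ^ 2 + ‖y‖ ^ 2) ^ 2)

/-- The three elements `Z₀, Z₁, Z₂` of the kernel of the linearized Liouville operator. -/
noncomputable def Zker (μ : ℝ) : Fin 3 → EuclideanSpace ℝ (Fin 2) → ℝ :=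
  ![fun y => (μ ^ 2 - ‖y‖ ^ 2) / (μ ^ 2 + ‖y‖ ^ 2),
    fun y => 2 * μ * y 0 / (μ ^ 2 + ‖y‖ ^ 2),
    fun y => 2 * μ * y 1 / (μ ^ 2 + ‖y‖ ^ 2)]

/-! `e^{Ū_μ} = 8μ²/(μ² + |y|²)²`, and `(Z₀, Z₁, Z₂)` is the inverse stereographic projection
onto the unit sphere, so `Z₀² + Z₁² + Z₂² = 1`. The integrals of `e^{Ū_μ}` and `e^{Ū_μ} Z₀²`
are radial and equal `8π` and `8π/3` by explicit primitives. A reflection `y_k ↦ -y_k` makes each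
off-diagonal integrand odd, the swap `y₀ ↔ y₁` exchanges `Z₁` and `Z₂`, and integrating
`e^{Ū_μ} (Z₀² + Z₁² + Z₂²) = e^{Ū_μ}` then gives `8π/3` for `Z₁²` and `Z₂²` as well. -/

open Set Filter Topology

section

local notation "ℝ²" => EuclideanSpace ℝ (Fin 2)

theorem integrable_and_integral_fun_norm_of_hasDerivAt {f g : ℝ → ℝ} {l : ℝ}
    (hderiv : ∀ r ∈ Ici (0 : ℝ), HasDerivAt g (r * f r) r)
    (hnonneg : ∀ r ∈ Ioi (0 : ℝ), 0 ≤ r * f r) (hlim : Tendsto g atTop (𝓝 l)) :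
    Integrable (fun y : ℝ² => f ‖y‖) ∧ ∫ y : ℝ², f ‖y‖ = 2 * π * (l - g 0) := by
  have hball : volume.real (Metric.ball (0 : ℝ²) 1) = π := by
    simp [measureReal_def, EuclideanSpace.volume_ball, Real.sq_sqrt pi_nonneg, one_add_one_eq_two,
      ENNReal.toReal_ofReal pi_nonneg]
  constructor
  · rw [integrable_fun_norm_addHaar volume, finrank_euclideanSpace_fin]
    simpa using integrableOn_Ioi_deriv_of_nonneg' hderiv hnonneg hlim
  · rw [integral_fun_norm_addHaar volume, finrank_euclideanSpace_fin, hball]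
    norm_num only [nsmul_eq_mul, smul_eq_mul, pow_one]
    rw [integral_Ioi_of_hasDerivAt_of_nonneg' hderiv hnonneg hlim]
    ring

theorem integral_eq_zero_of_comp_eq_neg {α G : Type*} [MeasurableSpace α] [NormedAddCommGroup G]
    [NormedSpace ℝ G] {ν : Measure α} {e : α ≃ᵐ α} (he : MeasurePreserving e ν ν) {f : α → G}
    (hf : ∀ x, f (e x) = -f x) : ∫ x, f x ∂ν = 0 := by
  have h := he.integral_comp' f
  simp only [hf, integral_neg] at h
  have h2 : (2 : ℝ) • ∫ x, f x ∂ν = 0 := by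
    rw [two_smul]
    nth_rewrite 1 [← h]
    exact neg_add_cancel _
  exact (smul_eq_zero.mp h2).resolve_left two_ne_zero

noncomputable def negCoord {n : ℕ} (k : Fin n) :
    EuclideanSpace ℝ (Fin n) ≃ₗᵢ[ℝ] EuclideanSpace ℝ (Fin n) :=
  LinearIsometryEquiv.piLpCongrRight 2 fun i =>
    if i = k then LinearIsometryEquiv.neg ℝ else LinearIsometryEquiv.refl ℝ ℝ

@[simp]
theorem negCoord_apply {n : ℕ} (k i : Fin n) (y : EuclideanSpace ℝ (Fin n)) :
    negCoord k y i = if i = k then -y i else y i := by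
  by_cases h : i = k <;> simp [negCoord, h, LinearIsometryEquiv.piLpCongrRight_apply]

theorem tendsto_inv_sq_add_sq_atTop (a : ℝ) :
    Tendsto (fun r : ℝ => (a ^ 2 + r ^ 2)⁻¹) atTop (𝓝 0) :=
  (tendsto_atTop_add_const_left _ _ (tendsto_pow_atTop two_ne_zero)).inv_tendsto_atTop

variable {μ : ℝ}

theorem exp_Ubar (hμ : μ ≠ 0) (y : ℝ²) :
    exp (Ubar μ y) = 8 * μ ^ 2 / (μ ^ 2 + ‖y‖ ^ 2) ^ 2 :=
  exp_log (by positivity)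

theorem Ubar_linearIsometryEquiv (e : ℝ² ≃ₗᵢ[ℝ] ℝ²) (y : ℝ²) : Ubar μ (e y) = Ubar μ y := by
  simp [Ubar]

theorem sum_Zker_sq (hμ : μ ≠ 0) (y : ℝ²) : ∑ i, Zker μ i y ^ 2 = 1 := by
  have hy : ‖y‖ ^ 2 = y 0 ^ 2 + y 1 ^ 2 := by
    simp [EuclideanSpace.norm_sq_eq, Fin.sum_univ_two]
  have hpos : 0 < μ ^ 2 + ‖y‖ ^ 2 := by positivity
  simp only [Fin.sum_univ_three, Zker, Matrix.cons_val_zero, Matrix.cons_val_one,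
    Matrix.cons_val_two, Matrix.head_cons, Matrix.tail_cons]
  field_simp
  rw [hy]
  ring

theorem abs_Zker_le_one (hμ : μ ≠ 0) (i : Fin 3) (y : ℝ²) : |Zker μ i y| ≤ 1 := by
  rw [← sq_le_one_iff_abs_le_one, ← sum_Zker_sq hμ y]
  exact Finset.single_le_sum (fun j _ => sq_nonneg (Zker μ j y)) (Finset.mem_univ i)

theorem measurable_Zker (i : Fin 3) : Measurable (Zker μ i) := by
  fin_cases i <;> simp [Zker] <;> fun_prop

theorem Zker_negCoord (k : Fin 2) (i : Fin 3) (y : ℝ²) :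
    Zker μ i (negCoord k y) = if i = k.succ then -Zker μ i y else Zker μ i y := by
  fin_cases k <;> fin_cases i <;> simp [Zker, neg_div]

theorem hasDerivAt_radial_primitive_exp_Ubar (hμ : μ ≠ 0) (r : ℝ) :
    HasDerivAt (fun r => -(4 * μ ^ 2) * (μ ^ 2 + r ^ 2)⁻¹)
      (r * (8 * μ ^ 2 / (μ ^ 2 + r ^ 2) ^ 2)) r := by
  have hpos : 0 < μ ^ 2 + r ^ 2 := by positivity
  refine ((((hasDerivAt_pow 2 r).const_add (μ ^ 2)).inv hpos.ne').const_mul _).congr_deriv ?_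
  field_simp
  ring

/- With `s = μ² + r²` one has `(μ² - r²)² = 4μ⁴ - 4μ²s + s²` and `2r dr = ds`, so the primitive
is a polynomial in `1/s`. -/
theorem hasDerivAt_radial_primitive_exp_Ubar_mul_Zker_zero_sq (hμ : μ ≠ 0) (r : ℝ) :
    HasDerivAt (fun r => 4 * μ ^ 2 * (-(4 * μ ^ 4 / 3) * ((μ ^ 2 + r ^ 2)⁻¹) ^ 3
      + 2 * μ ^ 2 * ((μ ^ 2 + r ^ 2)⁻¹) ^ 2 - (μ ^ 2 + r ^ 2)⁻¹))
      (r * (8 * μ ^ 2 * (μ ^ 2 - r ^ 2) ^ 2 / (μ ^ 2 + r ^ 2) ^ 4)) r := by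
  have hpos : 0 < μ ^ 2 + r ^ 2 := by positivity
  have hv := ((hasDerivAt_pow 2 r).const_add (μ ^ 2)).fun_inv hpos.ne'
  refine ((((hv.pow 3).const_mul _).add ((hv.pow 2).const_mul _)).sub hv
    |>.const_mul _).congr_deriv ?_
  norm_num only
  field_simp
  ring

theorem integrable_exp_Ubar_and_integral_exp_Ubar (hμ : μ ≠ 0) :
    Integrable (fun y : ℝ² => exp (Ubar μ y)) ∧ ∫ y : ℝ², exp (Ubar μ y) = 8 * π := by
  have hlim : Tendsto (fun r => -(4 * μ ^ 2) * (μ ^ 2 + r ^ 2)⁻¹) atTop (𝓝 0) := by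
    simpa using (tendsto_inv_sq_add_sq_atTop μ).const_mul (-(4 * μ ^ 2))
  have h := integrable_and_integral_fun_norm_of_hasDerivAt
    (fun r _ => hasDerivAt_radial_primitive_exp_Ubar hμ r) (fun r (hr : 0 < r) => by positivity)
    hlim
  simp_rw [exp_Ubar hμ]
  convert h using 2
  field_simp
  ring

theorem integral_exp_Ubar_mul_Zker_zero_mul_self (hμ : μ ≠ 0) :
    ∫ y : ℝ², exp (Ubar μ y) * Zker μ 0 y * Zker μ 0 y = 8 * π / 3 := by
  have hlim : Tendsto (fun r => 4 * μ ^ 2 * (-(4 * μ ^ 4 / 3) * ((μ ^ 2 + r ^ 2)⁻¹) ^ 3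
      + 2 * μ ^ 2 * ((μ ^ 2 + r ^ 2)⁻¹) ^ 2 - (μ ^ 2 + r ^ 2)⁻¹)) atTop (𝓝 0) := by
    have hP : Continuous fun v : ℝ =>
        4 * μ ^ 2 * (-(4 * μ ^ 4 / 3) * v ^ 3 + 2 * μ ^ 2 * v ^ 2 - v) := by
      fun_prop
    simpa [Function.comp_def] using (hP.tendsto 0).comp (tendsto_inv_sq_add_sq_atTop μ)
  have h := integrable_and_integral_fun_norm_of_hasDerivAt
    (fun r _ => hasDerivAt_radial_primitive_exp_Ubar_mul_Zker_zero_sq hμ r)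
    (fun r (hr : 0 < r) => by positivity) hlim
  have hradial : ∀ y : ℝ², exp (Ubar μ y) * Zker μ 0 y * Zker μ 0 y
      = 8 * μ ^ 2 * (μ ^ 2 - ‖y‖ ^ 2) ^ 2 / (μ ^ 2 + ‖y‖ ^ 2) ^ 4 := by
    intro y
    have hpos : 0 < μ ^ 2 + ‖y‖ ^ 2 := by positivity
    simp only [exp_Ubar hμ, Zker, Matrix.cons_val_zero]
    field_simp
  simp_rw [hradial]
  rw [h.2]
  field_simp
  ring

theorem integrable_exp_Ubar_mul_Zker_mul_Zker (hμ : μ ≠ 0) (i j : Fin 3) :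
    Integrable fun y : ℝ² => exp (Ubar μ y) * Zker μ i y * Zker μ j y := by
  have h := (integrable_exp_Ubar_and_integral_exp_Ubar hμ).1
  refine h.mono' ((h.aestronglyMeasurable.mul (measurable_Zker i).aestronglyMeasurable).mul
    (measurable_Zker j).aestronglyMeasurable) (.of_forall fun y => ?_)
  rw [norm_mul, norm_mul, norm_of_nonneg (exp_pos _).le, norm_eq_abs, norm_eq_abs]
  calc exp (Ubar μ y) * |Zker μ i y| * |Zker μ j y| ≤ exp (Ubar μ y) * 1 * 1 := by
        gcongr <;> exact abs_Zker_le_one hμ _ y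
    _ = exp (Ubar μ y) := by ring

theorem integral_exp_Ubar_mul_Zker_mul_Zker_of_ne {i j : Fin 3} (hij : i ≠ j) :
    ∫ y : ℝ², exp (Ubar μ y) * Zker μ i y * Zker μ j y = 0 := by
  have hodd : ∀ k : Fin 2, (∀ y : ℝ², exp (Ubar μ (negCoord k y)) * Zker μ i (negCoord k y) *
      Zker μ j (negCoord k y) = -(exp (Ubar μ y) * Zker μ i y * Zker μ j y)) →
      ∫ y : ℝ², exp (Ubar μ y) * Zker μ i y * Zker μ j y = 0 :=
    fun k hk => integral_eq_zero_of_comp_eq_neg (e := (negCoord k).toMeasurableEquiv)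
      (negCoord k).measurePreserving hk
  fin_cases i <;> fin_cases j <;> first
    | exact absurd rfl hij
    | (apply hodd 0; simp [Ubar_linearIsometryEquiv, Zker_negCoord]; done)
    | (apply hodd 1; simp [Ubar_linearIsometryEquiv, Zker_negCoord])

theorem integral_exp_Ubar_mul_Zker_two_mul_self :
    ∫ y : ℝ², exp (Ubar μ y) * Zker μ 2 y * Zker μ 2 y
      = ∫ y : ℝ², exp (Ubar μ y) * Zker μ 1 y * Zker μ 1 y := by
  let σ : ℝ² ≃ₗᵢ[ℝ] ℝ² := LinearIsometryEquiv.piLpCongrLeft 2 ℝ ℝ (Equiv.swap 0 1)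
  rw [← σ.measurePreserving.integral_comp' (f := σ.toMeasurableEquiv)]
  simp [σ, Ubar_linearIsometryEquiv, Zker, LinearIsometryEquiv.piLpCongrLeft_apply]

theorem integral_exp_Ubar_mul_Zker_mul_self (hμ : μ ≠ 0) (i : Fin 3) :
    ∫ y : ℝ², exp (Ubar μ y) * Zker μ i y * Zker μ i y = 8 * π / 3 := by
  have hsum : ∑ i, ∫ y : ℝ², exp (Ubar μ y) * Zker μ i y * Zker μ i y = 8 * π := by
    rw [← integral_finsetSum _ fun i _ => integrable_exp_Ubar_mul_Zker_mul_Zker hμ i i,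
      ← (integrable_exp_Ubar_and_integral_exp_Ubar hμ).2]
    congr 1 with y
    simp_rw [mul_assoc, ← Finset.mul_sum, ← sq, sum_Zker_sq hμ, mul_one]
  rw [Fin.sum_univ_three, integral_exp_Ubar_mul_Zker_zero_mul_self hμ,
    integral_exp_Ubar_mul_Zker_two_mul_self] at hsum
  match i with
  | 0 => exact integral_exp_Ubar_mul_Zker_zero_mul_self hμ
  | 1 => linarith
  | 2 => rw [integral_exp_Ubar_mul_Zker_two_mul_self]; linarith

end

/-- For every `μ > 0` and all `i, j ∈ {0,1,2}`,
`∫_{ℝ²} e^{Ū_μ} Z_i Z_j dy = (8π/3) δ_{ij}`. -/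
theorem integral_exp_Ubar_Z_mul_Z (μ : ℝ) (hμ : 0 < μ) (i j : Fin 3) :
    ∫ y : EuclideanSpace ℝ (Fin 2), Real.exp (Ubar μ y) * Zker μ i y * Zker μ j y
      = (8 * π / 3) * (if i = j then 1 else 0) := by
  split_ifs with hij
  · subst hij
    rw [mul_one, integral_exp_Ubar_mul_Zker_mul_self hμ.ne']
  · rw [mul_zero, integral_exp_Ubar_mul_Zker_mul_Zker_of_ne hij]
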